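/- arXiv:2208.04543 — 6 statements merged into one kernel-verified Lean document; each statement's English description precedes it below -/
import Mathlib

section
/- For every Z > 0 one has 0 ≤ 𝒮(Z) ≤ 𝒮(1) + (3c/2)·log⁺(1/Z), where c is the constant from hypothesis (m4) and log⁺ x = max(log x, 0). -/
/- STATEMENT 2: For every Z > 0 one has
0 ≤ 𝒮(Z) ≤ 𝒮(1) + (3c/2)·log⁺(1/Z),
where c is the constant from hypothesis (m4) and log⁺ x = max(log x, 0). -/
theorem entropy_S_log_bound
    (P P' S : ℝ → ℝ) (c : ℝ)
    (hderiv : ∀ Z : ℝ, 0 ≤ Z → HasDerivAt P (P' Z) Z)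
    (hP'cont : ContinuousOn P' (Set.Ici 0))
    (hP0 : P 0 = 0)
    (hP'pos : ∀ Z : ℝ, 0 ≤ Z → 0 < P' Z)
    (hc : 0 < c)
    (hm4 : ∀ Z : ℝ, 0 < Z →
      0 < ((5/3) * P Z - P' Z * Z) / Z ∧ ((5/3) * P Z - P' Z * Z) / Z ≤ c)
    (hm7 : ∀ Z : ℝ, 0 < Z →
      HasDerivAt S (-(3/2) * ((5/3) * P Z - P' Z * Z) / Z ^ 2) Z)
    (hm8 : Filter.Tendsto S Filter.atTop (nhds 0)) :
    ∀ Z : ℝ, 0 < Z →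
      0 ≤ S Z ∧ S Z ≤ S 1 + (3 * c / 2) * max (Real.log (1 / Z)) 0 := by
  intro Z hZ
  -- S is antitone on (0, ∞)
  have hanti : AntitoneOn S (Set.Ioi (0:ℝ)) := by
    apply antitoneOn_of_deriv_nonpos (convex_Ioi 0)
    · exact fun x hx => (hm7 x hx).continuousAt.continuousWithinAt
    · rw [interior_Ioi]
      exact fun x hx => (hm7 x hx).differentiableAt.differentiableWithinAt
    · rw [interior_Ioi]
      intro x hx
      rw [(hm7 x hx).deriv]
      have hx0 : (0:ℝ) < x := hx
      have h1 := (hm4 x hx0).1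
      have hN : 0 < (5/3) * P x - P' x * x := by
        have := mul_pos h1 hx0
        rwa [div_mul_cancel₀ _ (ne_of_gt hx0)] at this
      have hx2 : (0:ℝ) < x ^ 2 := by positivity
      have : 0 < (3/2) * ((5/3) * P x - P' x * x) / x ^ 2 := by positivity
      linarith [this, (by ring : -(3/2) * ((5/3) * P x - P' x * x) / x ^ 2 = -((3/2) * ((5/3) * P x - P' x * x) / x ^ 2))]
  -- nonnegativity from the third law
  have hnonneg : 0 ≤ S Z := by
    apply le_of_tendsto hm8
    filter_upwards [Filter.eventually_ge_atTop Z] with b hb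
    exact hanti hZ (lt_of_lt_of_le hZ hb) hb
  refine ⟨hnonneg, ?_⟩
  -- g(t) = S t + (3c/2) log t is monotone on (0, ∞)
  set g : ℝ → ℝ := fun t => S t + (3 * c / 2) * Real.log t with hg
  have hgderiv : ∀ x : ℝ, 0 < x →
      HasDerivAt g (-(3/2) * ((5/3) * P x - P' x * x) / x ^ 2 + (3 * c / 2) * x⁻¹) x := by
    intro x hx
    exact (hm7 x hx).add (((Real.hasDerivAt_log (ne_of_gt hx)).const_mul (3 * c / 2)))
  have hmono : MonotoneOn g (Set.Ioi (0:ℝ)) := by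
    apply monotoneOn_of_deriv_nonneg (convex_Ioi 0)
    · exact fun x hx => (hgderiv x hx).continuousAt.continuousWithinAt
    · rw [interior_Ioi]
      exact fun x hx => (hgderiv x hx).differentiableAt.differentiableWithinAt
    · rw [interior_Ioi]
      intro x hx
      rw [(hgderiv x hx).deriv]
      have hx0 : (0:ℝ) < x := hx
      have h2 := (hm4 x hx0).2
      have hN : (5/3) * P x - P' x * x ≤ c * x := by
        have := mul_le_mul_of_nonneg_right h2 (le_of_lt hx0)
        rwa [div_mul_cancel₀ _ (ne_of_gt hx0)] at this
      have hx2 : (0:ℝ) < x ^ 2 := by positivity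
      have key : -(3/2) * ((5/3) * P x - P' x * x) / x ^ 2 + (3 * c / 2) * x⁻¹
          = ((3/2) * (c * x - ((5/3) * P x - P' x * x))) / x ^ 2 := by
        field_simp
        ring
      rw [key]
      have : 0 ≤ c * x - ((5/3) * P x - P' x * x) := by linarith
      positivity
  by_cases h1Z : 1 ≤ Z
  · have hS1 : S Z ≤ S 1 := hanti (by norm_num) hZ h1Z
    have hmax : 0 ≤ max (Real.log (1 / Z)) 0 := le_max_right _ _
    nlinarith [mul_nonneg (by positivity : (0:ℝ) ≤ 3 * c / 2) hmax]
  · push_neg at h1Z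
    have hgle : g Z ≤ g 1 := hmono hZ (by norm_num) (le_of_lt h1Z)
    have hlog : Real.log (1 / Z) = - Real.log Z := by
      rw [one_div, Real.log_inv]
    have hlogpos : 0 ≤ Real.log (1 / Z) := by
      rw [hlog, le_neg, neg_zero]
      exact Real.log_nonpos (le_of_lt hZ) (le_of_lt h1Z)
    rw [max_eq_left hlogpos, hlog]
    simp only [hg, Real.log_one, mul_zero, add_zero] at hgle
    linarith
end

section
/- There exists a constant C > 0 such that for all ϱ > 0 and ϑ > 0 one has 0 ≤ ϱ·𝒮(ϱ/ϑ^{3/2}) ≤ C·(ϱ·log⁺ϱ + ϱ·log⁺ϑ + 1), where log⁺ x = max(log x, 0). (This is the entropy estimate (e19): 0 ≤ ϱ·s_m(ϱ,ϑ) ≲ ϱ log⁺ϱ + ϱ log⁺ϑ + 1 for the monatomic entropy s_m(ϱ,ϑ) = 𝒮(ϱ/ϑ^{3/2}).) -/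
/- STATEMENT 3: There exists a constant C > 0 such that for all ϱ > 0 and ϑ > 0 one has
0 ≤ ϱ·𝒮(ϱ/ϑ^{3/2}) ≤ C·(ϱ·log⁺ϱ + ϱ·log⁺ϑ + 1), where log⁺ x = max(log x, 0).
(Entropy estimate (e19) for the monatomic entropy s_m(ϱ,ϑ) = 𝒮(ϱ/ϑ^{3/2}).) -/
theorem monatomic_entropy_estimate
    (P P' S : ℝ → ℝ) (c : ℝ)
    (hderiv : ∀ Z : ℝ, 0 ≤ Z → HasDerivAt P (P' Z) Z)
    (hP'cont : ContinuousOn P' (Set.Ici 0))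
    (hP0 : P 0 = 0)
    (hP'pos : ∀ Z : ℝ, 0 ≤ Z → 0 < P' Z)
    (hc : 0 < c)
    (hm4 : ∀ Z : ℝ, 0 < Z →
      0 < ((5/3) * P Z - P' Z * Z) / Z ∧ ((5/3) * P Z - P' Z * Z) / Z ≤ c)
    (hm7 : ∀ Z : ℝ, 0 < Z →
      HasDerivAt S (-(3/2) * ((5/3) * P Z - P' Z * Z) / Z ^ 2) Z)
    (hm8 : Filter.Tendsto S Filter.atTop (nhds 0)) :
    ∃ C : ℝ, 0 < C ∧ ∀ ϱ ϑ : ℝ, 0 < ϱ → 0 < ϑ →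
      0 ≤ ϱ * S (ϱ / ϑ ^ ((3:ℝ)/2)) ∧
      ϱ * S (ϱ / ϑ ^ ((3:ℝ)/2)) ≤
        C * (ϱ * max (Real.log ϱ) 0 + ϱ * max (Real.log ϑ) 0 + 1) := by
  have hioi : interior (Set.Ioi (0:ℝ)) = Set.Ioi 0 := isOpen_Ioi.interior_eq
  have hScont : ContinuousOn S (Set.Ioi 0) := fun Z hZ =>
    ((hm7 Z hZ).continuousAt).continuousWithinAt
  -- S is antitone on (0, ∞)
  have hanti : AntitoneOn S (Set.Ioi 0) := by
    apply antitoneOn_of_deriv_nonpos (convex_Ioi 0) hScont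
    · rw [hioi]; exact fun Z hZ => ((hm7 Z hZ).differentiableAt).differentiableWithinAt
    · rw [hioi]; intro Z hZ
      rw [(hm7 Z hZ).deriv]
      have hq : 0 < ((5/3) * P Z - P' Z * Z) / Z := (hm4 Z hZ).1
      have hZ' : (0:ℝ) < Z := hZ
      have hqpos : 0 < (5/3) * P Z - P' Z * Z := by
        have := mul_pos hq hZ'
        rwa [div_mul_cancel₀] at this
        exact hZ'.ne'
      have : 0 < Z ^ 2 := by positivity
      have h1 : -(3/2) * ((5/3) * P Z - P' Z * Z) < 0 := by nlinarith
      exact le_of_lt (div_neg_of_neg_of_pos h1 this)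
  -- S is nonnegative on (0, ∞)
  have hS0 : ∀ Z : ℝ, 0 < Z → 0 ≤ S Z := by
    intro Z hZ
    refine le_of_tendsto hm8 ?_
    filter_upwards [Filter.eventually_ge_atTop (max Z 1)] with W hW
    have hZW : Z ≤ W := le_trans (le_max_left _ _) hW
    have hWpos : (0:ℝ) < W := lt_of_lt_of_le one_pos (le_trans (le_max_right _ _) hW)
    exact hanti hZ hWpos hZW
  -- g(Z) = S Z + (3/2)*c*log Z is monotone on (0, ∞)
  have hmono : MonotoneOn (fun Z => S Z + (3/2) * c * Real.log Z) (Set.Ioi 0) := by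
    apply monotoneOn_of_hasDerivWithinAt_nonneg (f' := fun Z =>
      -(3/2) * ((5/3) * P Z - P' Z * Z) / Z ^ 2 + (3/2) * c * Z⁻¹) (convex_Ioi 0)
    · intro Z hZ
      exact (hScont Z hZ).add
        ((continuousAt_const.mul
          (Real.continuousAt_log (ne_of_gt (Set.mem_Ioi.1 hZ)))).continuousWithinAt)
    · rw [hioi]; intro Z hZ
      exact (((hm7 Z hZ).add (((Real.hasDerivAt_log (ne_of_gt hZ)).const_mul
        ((3:ℝ)/2 * c)))).hasDerivWithinAt)
    · rw [hioi]; intro Z hZ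
      have hZ' : (0:ℝ) < Z := hZ
      have hle : ((5/3) * P Z - P' Z * Z) / Z ≤ c := (hm4 Z hZ).2
      have hq : 0 < ((5/3) * P Z - P' Z * Z) / Z := (hm4 Z hZ).1
      have hqle : (5/3) * P Z - P' Z * Z ≤ c * Z := by
        rw [div_le_iff₀ hZ'] at hle; linarith
      have hZ2 : (0:ℝ) < Z ^ 2 := by positivity
      rw [div_add' _ _ _ (ne_of_gt hZ2)] at *
      have hz : (3/2) * c * Z⁻¹ * Z ^ 2 = (3/2) * c * Z := by
        field_simp
      have key : -(3/2) * ((5/3) * P Z - P' Z * Z) + (3/2) * c * Z⁻¹ * Z ^ 2 ≥ 0 := by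
        rw [hz]; nlinarith
      positivity
  -- pointwise bound for S
  have hS1 : 0 ≤ S 1 := hS0 1 one_pos
  have hbound : ∀ Z : ℝ, 0 < Z → S Z ≤ S 1 + (3/2) * c * max (-Real.log Z) 0 := by
    intro Z hZ
    rcases le_or_gt 1 Z with h1 | h1
    · have := hanti (Set.mem_Ioi.2 one_pos) (Set.mem_Ioi.2 (lt_of_lt_of_le one_pos h1)) h1
      have : S Z ≤ S 1 := this
      have hmax : (0:ℝ) ≤ max (-Real.log Z) 0 := le_max_right _ _
      nlinarith
    · have hg := hmono (Set.mem_Ioi.2 hZ) (Set.mem_Ioi.2 one_pos) h1.le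
      simp only [Real.log_one, mul_zero, add_zero] at hg
      have hlog : Real.log Z < 0 := Real.log_neg hZ h1
      have hmax : max (-Real.log Z) 0 = -Real.log Z := max_eq_left (by linarith)
      rw [hmax]; linarith
  -- conclusion
  refine ⟨Real.exp 1 * S 1 + (9/4) * c + (3/2) * c + 1, by positivity, ?_⟩
  intro ϱ ϑ hϱ hϑ
  have hϑ32 : (0:ℝ) < ϑ ^ ((3:ℝ)/2) := Real.rpow_pos_of_pos hϑ _
  set Z := ϱ / ϑ ^ ((3:ℝ)/2) with hZdef
  have hZpos : 0 < Z := div_pos hϱ hϑ32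
  constructor
  · exact mul_nonneg hϱ.le (hS0 Z hZpos)
  · have hlogZ : Real.log Z = Real.log ϱ - (3/2) * Real.log ϑ := by
      rw [hZdef, Real.log_div (ne_of_gt hϱ) (ne_of_gt hϑ32), Real.log_rpow hϑ]
    have h1 : S Z ≤ S 1 + (3/2) * c * max (-Real.log Z) 0 := hbound Z hZpos
    -- max splitting
    have hsplit : max (-Real.log Z) 0 ≤ (3/2) * max (Real.log ϑ) 0 + max (-Real.log ϱ) 0 := by
      rw [hlogZ]
      have h2 : (0:ℝ) ≤ (3/2) * max (Real.log ϑ) 0 + max (-Real.log ϱ) 0 := by positivity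
      apply max_le _ h2
      have := le_max_left (Real.log ϑ) 0
      have := le_max_left (-Real.log ϱ) 0
      linarith
    -- ϱ * max (-log ϱ) 0 ≤ 1
    have hneg : ϱ * max (-Real.log ϱ) 0 ≤ 1 := by
      rcases le_or_gt 1 ϱ with h | h
      · have : Real.log ϱ ≥ 0 := Real.log_nonneg h
        have : max (-Real.log ϱ) 0 = 0 := max_eq_right (by linarith)
        rw [this]; simp
      · have hlog : Real.log ϱ ≤ ϱ - 1 := Real.log_le_sub_one_of_pos hϱ
        have hlog' : -Real.log ϱ ≤ 1/ϱ - 1 := by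
          have := Real.log_le_sub_one_of_pos (show (0:ℝ) < 1/ϱ by positivity)
          rw [Real.log_div one_ne_zero (ne_of_gt hϱ), Real.log_one] at this
          linarith
        have h2 : max (-Real.log ϱ) 0 ≤ 1/ϱ := by
          apply max_le (by linarith [hlog']) (by positivity)
        calc ϱ * max (-Real.log ϱ) 0 ≤ ϱ * (1/ϱ) := by
              exact mul_le_mul_of_nonneg_left h2 hϱ.le
          _ = 1 := by field_simp
    -- ϱ ≤ e * (ϱ * log⁺ ϱ + 1)
    have hlin : ϱ ≤ Real.exp 1 * (ϱ * max (Real.log ϱ) 0 + 1) := by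
      rcases le_or_gt ϱ (Real.exp 1) with h | h
      · have h2 : (0:ℝ) ≤ ϱ * max (Real.log ϱ) 0 := by positivity
        nlinarith [Real.exp_pos 1]
      · have hlog : (1:ℝ) ≤ Real.log ϱ := by
          rw [Real.le_log_iff_exp_le hϱ]; exact h.le
        have hmax : max (Real.log ϱ) 0 = Real.log ϱ := max_eq_left (by linarith)
        rw [hmax]
        have he1 : (1:ℝ) ≤ Real.exp 1 := Real.one_le_exp zero_le_one
        have hx : ϱ ≤ ϱ * Real.log ϱ := by nlinarith
        nlinarith [mul_nonneg (sub_nonneg.2 he1)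
          (show (0:ℝ) ≤ ϱ * Real.log ϱ + 1 by nlinarith)]
    -- put everything together
    have key : ϱ * S Z ≤ ϱ * S 1 + (9/4) * c * (ϱ * max (Real.log ϑ) 0) + (3/2) * c := by
      have h3 : ϱ * S Z ≤ ϱ * (S 1 + (3/2) * c * max (-Real.log Z) 0) :=
        mul_le_mul_of_nonneg_left h1 hϱ.le
      have h4 : ϱ * max (-Real.log Z) 0 ≤
          (3/2) * (ϱ * max (Real.log ϑ) 0) + ϱ * max (-Real.log ϱ) 0 := by
        have := mul_le_mul_of_nonneg_left hsplit hϱ.le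
        linarith [this]
      nlinarith [hneg, hc, h4]
    have hA : (0:ℝ) ≤ ϱ * max (Real.log ϱ) 0 := by positivity
    have hB : (0:ℝ) ≤ ϱ * max (Real.log ϑ) 0 := by positivity
    have hϱS1 : ϱ * S 1 ≤ Real.exp 1 * S 1 * (ϱ * max (Real.log ϱ) 0 + 1) := by
      calc ϱ * S 1 ≤ (Real.exp 1 * (ϱ * max (Real.log ϱ) 0 + 1)) * S 1 :=
            mul_le_mul_of_nonneg_right hlin hS1
        _ = Real.exp 1 * S 1 * (ϱ * max (Real.log ϱ) 0 + 1) := by ring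
    have hexpS : 0 ≤ Real.exp 1 * S 1 := by positivity
    set A := ϱ * max (Real.log ϱ) 0
    set B := ϱ * max (Real.log ϑ) 0
    have p1 : 0 ≤ Real.exp 1 * S 1 * B := mul_nonneg hexpS hB
    have p2 : 0 ≤ c * A := mul_nonneg hc.le hA
    have p3 : 0 ≤ c * B := mul_nonneg hc.le hB
    have p4 : 0 ≤ Real.exp 1 * S 1 * A := mul_nonneg hexpS hA
    have hring : (Real.exp 1 * S 1 + 9/4*c + 3/2*c + 1) * (A + B + 1)
        = Real.exp 1 * S 1 * A + Real.exp 1 * S 1 * B + Real.exp 1 * S 1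
          + 9/4*(c*A) + 9/4*(c*B) + 9/4*c + 3/2*(c*A) + 3/2*(c*B) + 3/2*c
          + A + B + 1 := by ring
    linarith [key, hϱS1, hring]
end

section
/- Let a > 0, ρ̄ > 0 and define the total entropy s(ϱ,ϑ) = 𝒮(ϱ/ϑ^{3/2}) + (4a/3)·ϑ³/ϱ for ϱ, ϑ > 0. Then there exists a constant C > 0 such that for all ϱ ∈ (0, ρ̄] and all ϑ > 0 one has 0 ≤ ϱ·s(ϱ,ϑ) ≤ C·(1 + ϑ³). -/
/- STATEMENT 4: Let a > 0, ρ̄ > 0 and define the total entropy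
s(ϱ,ϑ) = 𝒮(ϱ/ϑ^{3/2}) + (4a/3)·ϑ³/ϱ for ϱ, ϑ > 0. Then there exists C > 0 such that
for all ϱ ∈ (0, ρ̄] and all ϑ > 0 one has 0 ≤ ϱ·s(ϱ,ϑ) ≤ C·(1 + ϑ³). -/
set_option maxHeartbeats 1000000 in
theorem total_entropy_bound
    (P P' S : ℝ → ℝ) (c : ℝ)
    (hderiv : ∀ Z : ℝ, 0 ≤ Z → HasDerivAt P (P' Z) Z)
    (hP'cont : ContinuousOn P' (Set.Ici 0))
    (hP0 : P 0 = 0)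
    (hP'pos : ∀ Z : ℝ, 0 ≤ Z → 0 < P' Z)
    (hc : 0 < c)
    (hm4 : ∀ Z : ℝ, 0 < Z →
      0 < ((5/3) * P Z - P' Z * Z) / Z ∧ ((5/3) * P Z - P' Z * Z) / Z ≤ c)
    (hm7 : ∀ Z : ℝ, 0 < Z →
      HasDerivAt S (-(3/2) * ((5/3) * P Z - P' Z * Z) / Z ^ 2) Z)
    (hm8 : Filter.Tendsto S Filter.atTop (nhds 0))
    (a ρbar : ℝ) (ha : 0 < a) (hρbar : 0 < ρbar) :
    ∃ C : ℝ, 0 < C ∧ ∀ ϱ ϑ : ℝ, 0 < ϱ → ϱ ≤ ρbar → 0 < ϑ →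
      0 ≤ ϱ * (S (ϱ / ϑ ^ ((3:ℝ)/2)) + (4 * a / 3) * ϑ ^ 3 / ϱ) ∧
      ϱ * (S (ϱ / ϑ ^ ((3:ℝ)/2)) + (4 * a / 3) * ϑ ^ 3 / ϱ) ≤ C * (1 + ϑ ^ 3) := by
  -- positivity of the numerator N Z = (5/3) P Z - P' Z * Z
  have hN : ∀ Z : ℝ, 0 < Z → 0 < (5/3) * P Z - P' Z * Z := by
    intro Z hZ
    have h := (hm4 Z hZ).1
    have := mul_pos h hZ
    rwa [div_mul_cancel₀ _ hZ.ne'] at this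
  have hNle : ∀ Z : ℝ, 0 < Z → (5/3) * P Z - P' Z * Z ≤ c * Z := by
    intro Z hZ
    have h := (hm4 Z hZ).2
    rwa [div_le_iff₀ hZ] at h
  -- S is strictly antitone on (0,∞)
  have hanti : StrictAntiOn S (Set.Ioi 0) := by
    apply strictAntiOn_of_deriv_neg (convex_Ioi 0)
    · intro x hx
      exact (hm7 x hx).continuousAt.continuousWithinAt
    · intro x hx
      rw [interior_Ioi] at hx
      have hx' : (0:ℝ) < x := hx
      rw [(hm7 x hx').deriv]
      apply div_neg_of_neg_of_pos
      · nlinarith [hN x hx']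
      · positivity
  -- S is nonnegative on (0,∞)
  have hSnn : ∀ Z : ℝ, 0 < Z → 0 ≤ S Z := by
    intro Z hZ
    refine le_of_tendsto hm8 ?_
    filter_upwards [Filter.eventually_ge_atTop (max Z 1)] with W hW
    have hWpos : (0:ℝ) < W := lt_of_lt_of_le one_pos (le_trans (le_max_right Z 1) hW)
    exact hanti.antitoneOn (Set.mem_Ioi.2 hZ) (Set.mem_Ioi.2 hWpos)
      (le_trans (le_max_left Z 1) hW)
  have hS1 : 0 ≤ S 1 := hSnn 1 one_pos
  -- the function g Z = S Z + (3/2) c log Z is monotone on (0,∞)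
  have hg' : ∀ x : ℝ, 0 < x →
      HasDerivAt (fun Z => S Z + (3/2) * c * Real.log Z)
        (-(3/2) * ((5/3) * P x - P' x * x) / x ^ 2 + (3/2) * c * x⁻¹) x := by
    intro x hx
    exact (hm7 x hx).add ((Real.hasDerivAt_log hx.ne').const_mul ((3/2) * c))
  have hgmono : MonotoneOn (fun Z => S Z + (3/2) * c * Real.log Z) (Set.Ioi 0) := by
    apply monotoneOn_of_deriv_nonneg (convex_Ioi 0)
    · intro x hx
      exact (hg' x hx).continuousAt.continuousWithinAt
    · rw [interior_Ioi]
      intro x hx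
      exact (hg' x hx).differentiableAt.differentiableWithinAt
    · rw [interior_Ioi]
      intro x hx
      have hx' : (0:ℝ) < x := hx
      rw [(hg' x hx').deriv]
      have hle := hNle x hx'
      have heq : -(3/2) * ((5/3) * P x - P' x * x) / x ^ 2 + (3/2) * c * x⁻¹
          = (3/2) * (c * x - ((5/3) * P x - P' x * x)) / x ^ 2 := by
        field_simp
        ring
      rw [heq]
      apply div_nonneg _ (by positivity)
      nlinarith
  -- key bound on S
  have hSbound : ∀ Z : ℝ, 0 < Z → S Z ≤ S 1 + (3/2) * c * max 0 (-Real.log Z) := by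
    intro Z hZ
    rcases le_or_gt Z 1 with h | h
    · have hmono := hgmono (Set.mem_Ioi.2 hZ) (Set.mem_Ioi.2 one_pos) h
      simp only [Real.log_one, mul_zero, add_zero] at hmono
      have hlog : Real.log Z ≤ 0 := Real.log_nonpos hZ.le h
      have hmax : max 0 (-Real.log Z) = -Real.log Z := max_eq_right (by linarith)
      rw [hmax]
      linarith
    · have hle : S Z ≤ S 1 := hanti.antitoneOn (Set.mem_Ioi.2 one_pos) (Set.mem_Ioi.2 hZ) h.le
      have hmax : (0:ℝ) ≤ max 0 (-Real.log Z) := le_max_left _ _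
      nlinarith
  refine ⟨ρbar * S 1 + (3/2) * c * ((3/2) * ρbar + 1) + 4 * a / 3 + 1, by positivity, ?_⟩
  intro ϱ ϑ hϱ hϱle hϑ
  have hϑr : (0:ℝ) < ϑ ^ ((3:ℝ)/2) := Real.rpow_pos_of_pos hϑ _
  set Z := ϱ / ϑ ^ ((3:ℝ)/2) with hZdef
  have hZ : 0 < Z := div_pos hϱ hϑr
  have hsplit : ϱ * (S Z + (4 * a / 3) * ϑ ^ 3 / ϱ) = ϱ * S Z + (4 * a / 3) * ϑ ^ 3 := by
    field_simp
  constructor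
  · rw [hsplit]
    have := hSnn Z hZ
    positivity
  · rw [hsplit]
    -- log of Z
    have hlogZ : Real.log Z = Real.log ϱ - (3/2) * Real.log ϑ := by
      rw [hZdef, Real.log_div hϱ.ne' hϑr.ne', Real.log_rpow hϑ]
    -- bound max 0 (-log Z)
    have hmaxbound : max 0 (-Real.log Z) ≤ (3/2) * max 0 (Real.log ϑ) + max 0 (-Real.log ϱ) := by
      apply max_le
      · have h1 : (0:ℝ) ≤ max 0 (Real.log ϑ) := le_max_left _ _
        have h2 : (0:ℝ) ≤ max 0 (-Real.log ϱ) := le_max_left _ _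
        linarith
      · have h1 : Real.log ϑ ≤ max 0 (Real.log ϑ) := le_max_right _ _
        have h2 : -Real.log ϱ ≤ max 0 (-Real.log ϱ) := le_max_right _ _
        rw [hlogZ]
        linarith
    have hmϑ : max 0 (Real.log ϑ) ≤ ϑ :=
      max_le hϑ.le (by linarith [Real.log_le_sub_one_of_pos hϑ])
    have hmϱ : ϱ * max 0 (-Real.log ϱ) ≤ 1 := by
      have hinv : (0:ℝ) < ϱ⁻¹ := inv_pos.2 hϱ
      have h1 : -Real.log ϱ ≤ ϱ⁻¹ - 1 := by
        have := Real.log_le_sub_one_of_pos hinv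
        rwa [Real.log_inv] at this
      have h2 : max 0 (-Real.log ϱ) ≤ ϱ⁻¹ := max_le hinv.le (by linarith)
      calc ϱ * max 0 (-Real.log ϱ) ≤ ϱ * ϱ⁻¹ := by
            exact mul_le_mul_of_nonneg_left h2 hϱ.le
        _ = 1 := mul_inv_cancel₀ hϱ.ne'
    -- piece together
    have hM : (0:ℝ) ≤ max 0 (-Real.log Z) := le_max_left _ _
    have hSZ := hSbound Z hZ
    have step1 : ϱ * S Z ≤ ϱ * S 1 + (3/2) * c * (ϱ * max 0 (-Real.log Z)) := by
      nlinarith [hSnn Z hZ]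
    have step2 : ϱ * max 0 (-Real.log Z) ≤ (3/2) * ρbar * ϑ + 1 := by
      have h3 : ϱ * max 0 (-Real.log Z)
          ≤ ϱ * ((3/2) * max 0 (Real.log ϑ) + max 0 (-Real.log ϱ)) :=
        mul_le_mul_of_nonneg_left hmaxbound hϱ.le
      have h4 : ϱ * max 0 (Real.log ϑ) ≤ ρbar * ϑ := by
        have := mul_le_mul hϱle hmϑ (le_max_left _ _) hρbar.le
        linarith
      nlinarith
    have step3 : ϱ * S 1 ≤ ρbar * S 1 := mul_le_mul_of_nonneg_right hϱle hS1
    have hϑ3 : ϑ ≤ 1 + ϑ ^ 3 := by nlinarith [sq_nonneg (ϑ - 1), sq_nonneg (ϑ + 1), hϑ.le]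
    have hcub : (0:ℝ) ≤ ϑ ^ 3 := by positivity
    have e1 : ρbar * S 1 ≤ ρbar * S 1 * (1 + ϑ ^ 3) := by
      nlinarith [mul_nonneg (mul_nonneg hρbar.le hS1) hcub]
    have e2 : (3/2) * c * ((3/2) * ρbar * ϑ + 1) ≤ (3/2) * c * ((3/2) * ρbar + 1) * (1 + ϑ ^ 3) := by
      nlinarith [mul_le_mul_of_nonneg_left hϑ3 (by positivity : (0:ℝ) ≤ (3/2) * c * ((3/2) * ρbar)),
        mul_nonneg hc.le hcub]
    have e3 : (4 * a / 3) * ϑ ^ 3 ≤ (4 * a / 3) * (1 + ϑ ^ 3) := by nlinarith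
    have e4 : ϱ * S Z ≤ ρbar * S 1 + (3/2) * c * ((3/2) * ρbar * ϑ + 1) := by
      have := mul_le_mul_of_nonneg_left step2 (by positivity : (0:ℝ) ≤ (3/2) * c)
      linarith
    have e5 : (0:ℝ) ≤ 1 * (1 + ϑ ^ 3) := by positivity
    nlinarith
end

section
/- There exists a constant C > 0 such that for every ϱ ∈ (0, ρ̄) one has ϱ·e_HS(ϱ) ≤ C·(1 + p_HS(ϱ)^{(s−1)/s}). (Since (s−1)/s < 1, this shows that uniform integrability of the hard-sphere pressure yields equi-integrability of the associated internal energy, as used in (e24).) -/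
set_option maxHeartbeats 1000000


/-- The hard-sphere pressure p_HS(ϱ) = b·ϱ/(ρ̄ − ϱ)^s. -/
noncomputable def pHS (b ρbar s ϱ : ℝ) : ℝ := b * ϱ / (ρbar - ϱ) ^ s

/-- The hard-sphere internal energy e_HS(ϱ) = ∫_{ρ̄/2}^{ϱ} b/(z·(ρ̄ − z)^s) dz. -/
noncomputable def eHS (b ρbar s ϱ : ℝ) : ℝ :=
  ∫ z in (ρbar / 2)..ϱ, b / (z * (ρbar - z) ^ s)

/- STATEMENT 10: There exists C > 0 such that for every ϱ ∈ (0, ρ̄) one has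
ϱ·e_HS(ϱ) ≤ C·(1 + p_HS(ϱ)^{(s−1)/s}); uniform integrability of the hard-sphere
pressure thus yields equi-integrability of the internal energy (used in (e24)). -/
theorem hard_sphere_energy_pressure_bound
    (b ρbar s : ℝ) (hb : 0 < b) (hρbar : 0 < ρbar) (hs : 1 < s) :
    ∃ C : ℝ, 0 < C ∧ ∀ ϱ : ℝ, 0 < ϱ → ϱ < ρbar →
      ϱ * eHS b ρbar s ϱ ≤ C * (1 + pHS b ρbar s ϱ ^ ((s - 1) / s)) := by
  have hs0 : (0:ℝ) < s := by linarith
  set r : ℝ := (s - 1) / s with hrdef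
  have hr0 : 0 < r := div_pos (by linarith) hs0
  set K : ℝ := (2 * b / (s - 1)) * (2 / (b * ρbar)) ^ r with hKdef
  have hK0 : 0 ≤ K := mul_nonneg (div_nonneg (by linarith) (by linarith)) (Real.rpow_nonneg (by positivity) r)
  refine ⟨K + 1, by linarith, fun ϱ hϱ0 hϱρ => ?_⟩
  have ha0 : 0 < ρbar - ϱ := by linarith
  have haS : 0 < (ρbar - ϱ) ^ s := Real.rpow_pos_of_pos ha0 s
  have hp0 : 0 ≤ pHS b ρbar s ϱ := by
    unfold pHS; positivity
  have hpr0 : 0 ≤ pHS b ρbar s ϱ ^ r := Real.rpow_nonneg hp0 r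
  rcases le_or_gt ϱ (ρbar / 2) with hcase | hcase
  · -- small density: energy is nonpositive
    have he : eHS b ρbar s ϱ ≤ 0 := by
      unfold eHS
      rw [intervalIntegral.integral_symm]
      simp only [neg_nonpos]
      apply intervalIntegral.integral_nonneg hcase
      intro z hz
      have hz0 : 0 < z := lt_of_lt_of_le hϱ0 hz.1
      have hz1 : 0 < ρbar - z := by have := hz.2; linarith
      have : 0 < (ρbar - z) ^ s := Real.rpow_pos_of_pos hz1 s
      positivity
    nlinarith [mul_nonpos_of_nonneg_of_nonpos hϱ0.le he]
  · -- large density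
    have hle : ρbar / 2 ≤ ϱ := hcase.le
    have huIcc : Set.uIcc (ρbar / 2) ϱ = Set.Icc (ρbar / 2) ϱ := Set.uIcc_of_le hle
    have hcontf : ContinuousOn (fun z => b / (z * (ρbar - z) ^ s)) (Set.uIcc (ρbar / 2) ϱ) := by
      rw [huIcc]
      apply ContinuousOn.div continuousOn_const
      · exact continuousOn_id.mul ((continuousOn_const.sub continuousOn_id).rpow_const
          (fun x hx => Or.inl (by have h2 := hx.2; intro h; simp only [Pi.sub_apply, id_eq] at h; nlinarith)))
      · intro x hx
        have hx0 : 0 < x := by have := hx.1; linarith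
        have hxr : 0 < (ρbar - x) ^ s := Real.rpow_pos_of_pos (by have := hx.2; linarith) s
        positivity
    have hcontg : ContinuousOn (fun z => (2 * b / ρbar) * (ρbar - z) ^ (-s))
        (Set.uIcc (ρbar / 2) ϱ) := by
      rw [huIcc]
      apply continuousOn_const.mul
      exact (continuousOn_const.sub continuousOn_id).rpow_const
        (fun x hx => Or.inl (by have h2 := hx.2; intro h; simp only [Pi.sub_apply, id_eq] at h; nlinarith))
    have hf_int : IntervalIntegrable (fun z => b / (z * (ρbar - z) ^ s)) MeasureTheory.volume (ρbar / 2) ϱ := hcontf.intervalIntegrable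
    have hg_int : IntervalIntegrable (fun z => (2 * b / ρbar) * (ρbar - z) ^ (-s)) MeasureTheory.volume (ρbar / 2) ϱ := hcontg.intervalIntegrable
    have hmono : eHS b ρbar s ϱ ≤ ∫ z in (ρbar / 2)..ϱ, (2 * b / ρbar) * (ρbar - z) ^ (-s) := by
      unfold eHS
      apply intervalIntegral.integral_mono_on hle hf_int hg_int
      intro x hx
      have hx0 : 0 < x := by have := hx.1; linarith
      have hax : 0 < ρbar - x := by have := hx.2; linarith
      have hT : 0 < (ρbar - x) ^ s := Real.rpow_pos_of_pos hax s
      rw [Real.rpow_neg hax.le, div_le_iff₀ (by positivity)]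
      have expand : 2 * b / ρbar * ((ρbar - x) ^ s)⁻¹ * (x * (ρbar - x) ^ s)
          = 2 * b * x / ρbar := by field_simp
      rw [expand, le_div_iff₀ hρbar]
      nlinarith [hx.1]
    have hcomp : (∫ z in (ρbar / 2)..ϱ, (ρbar - z) ^ (-s))
        = ∫ x in (ρbar - ϱ)..(ρbar - ρbar / 2), x ^ (-s) :=
      intervalIntegral.integral_comp_sub_left (fun x => x ^ (-s)) ρbar
    have hval : (∫ x in (ρbar - ϱ)..(ρbar - ρbar / 2), x ^ (-s))
        = ((ρbar - ρbar / 2) ^ (-s + 1) - (ρbar - ϱ) ^ (-s + 1)) / (-s + 1) := by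
      apply integral_rpow
      refine Or.inr ⟨by intro h; nlinarith, ?_⟩
      exact Set.notMem_uIcc_of_lt ha0 (by linarith)
    have hint_eq : (∫ z in (ρbar / 2)..ϱ, (2 * b / ρbar) * (ρbar - z) ^ (-s))
        = (2 * b / ρbar)
          * (((ρbar - ρbar / 2) ^ (-s + 1) - (ρbar - ϱ) ^ (-s + 1)) / (-s + 1)) := by
      rw [intervalIntegral.integral_const_mul, hcomp, hval]
    set X : ℝ := (ρbar - ϱ) ^ (1 - s) with hXdef
    set c : ℝ := (ρbar - ρbar / 2) ^ (-s + 1) with hcdef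
    have hX0 : 0 ≤ X := Real.rpow_nonneg ha0.le _
    have hc0 : 0 ≤ c := Real.rpow_nonneg (by linarith) _
    have hXeq : (ρbar - ϱ) ^ (-s + 1) = X := by
      rw [hXdef, show (1 - s : ℝ) = -s + 1 by ring]
    -- step 4: X ≤ (2/(b*ρbar))^r * p^r
    have hps : (b * ρbar / 2) * (ρbar - ϱ) ^ (-s) ≤ pHS b ρbar s ϱ := by
      unfold pHS
      rw [Real.rpow_neg ha0.le, ← div_eq_mul_inv]
      gcongr
      nlinarith
    have hstep : (b * ρbar / 2) ^ r * X ≤ pHS b ρbar s ϱ ^ r := by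
      have h := Real.rpow_le_rpow (by positivity) hps hr0.le
      rw [Real.mul_rpow (by positivity) (Real.rpow_nonneg ha0.le _),
        ← Real.rpow_mul ha0.le] at h
      have hexp : -s * r = 1 - s := by rw [hrdef]; field_simp; ring
      rwa [hexp] at h
    have h4 : X ≤ (2 / (b * ρbar)) ^ r * pHS b ρbar s ϱ ^ r := by
      have hA : (0:ℝ) < (b * ρbar / 2) ^ r := Real.rpow_pos_of_pos (by positivity) r
      have hinv : ((b * ρbar / 2) ^ r)⁻¹ = (2 / (b * ρbar)) ^ r := by
        rw [← Real.inv_rpow (by positivity), inv_div]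
      calc X = ((b * ρbar / 2) ^ r)⁻¹ * ((b * ρbar / 2) ^ r * X) := by
            field_simp
        _ ≤ ((b * ρbar / 2) ^ r)⁻¹ * (pHS b ρbar s ϱ ^ r) := by
            gcongr
        _ = (2 / (b * ρbar)) ^ r * pHS b ρbar s ϱ ^ r := by rw [hinv]
    -- combine
    have heq : (c - X) / (-s + 1) = (X - c) / (s - 1) := by
      rw [show (-s + 1 : ℝ) = -(s - 1) by ring, div_neg]
      ring
    calc ϱ * eHS b ρbar s ϱ
        ≤ ϱ * ((2 * b / ρbar) * (X / (s - 1))) := by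
          apply mul_le_mul_of_nonneg_left _ hϱ0.le
          calc eHS b ρbar s ϱ
              ≤ (2 * b / ρbar) * ((c - X) / (-s + 1)) := by
                rw [hXeq] at hint_eq
                rw [← hint_eq]; exact hmono
            _ = (2 * b / ρbar) * ((X - c) / (s - 1)) := by rw [heq]
            _ ≤ (2 * b / ρbar) * (X / (s - 1)) := by
                apply mul_le_mul_of_nonneg_left _ (by positivity)
                rw [div_le_div_iff₀ (by linarith) (by linarith)]
                nlinarith
      _ ≤ ρbar * ((2 * b / ρbar) * (X / (s - 1))) := by
          apply mul_le_mul_of_nonneg_right hϱρ.le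
          exact mul_nonneg (by positivity) (div_nonneg hX0 (by linarith))
      _ = (2 * b / (s - 1)) * X := by
          have h2 : s - 1 ≠ 0 := by linarith
          field_simp [hρbar.ne', h2]
      _ ≤ (2 * b / (s - 1)) * ((2 / (b * ρbar)) ^ r * pHS b ρbar s ϱ ^ r) :=
          mul_le_mul_of_nonneg_left h4 (div_nonneg (by linarith) (by linarith))
      _ = K * pHS b ρbar s ϱ ^ r := by rw [hKdef]; ring
      _ ≤ (K + 1) * (1 + pHS b ρbar s ϱ ^ r) := by
          have hexpand : (K + 1) * (1 + pHS b ρbar s ϱ ^ r)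
              = K * pHS b ρbar s ϱ ^ r + K + 1 + pHS b ρbar s ϱ ^ r := by ring
          rw [hexpand]
          linarith
end

section
/- Suppose s > 3. Then there exist ν ∈ (0, 1) and q > 2 such that s ≥ q·ν·s + q + 1. Moreover, for any such ν and q there exists a constant C > 0 such that for every ϱ ∈ [ρ̄/2, ρ̄) one has (ϱ · d/dϱ[(p_HS(ϱ))^ν])^q ≤ C·(ρ̄ − ϱ)^{1−s} (this is the comparison underlying estimate (e33) of the paper). -/
lemma pHS_hasDerivAt (b ρbar s ν ϱ : ℝ) (hϱ : 0 < ϱ) (h : ϱ < ρbar)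
    (hp : pHS b ρbar s ϱ ≠ 0) :
    HasDerivAt (fun r : ℝ => pHS b ρbar s r ^ ν)
      (ν * (b * ϱ / (ρbar - ϱ) ^ s) ^ (ν - 1) *
        ((b * (ρbar - ϱ) ^ s - b * ϱ * (s * (ρbar - ϱ) ^ (s - 1) * (-1))) /
          ((ρbar - ϱ) ^ s) ^ 2)) ϱ := by
  have ht : 0 < ρbar - ϱ := by linarith
  have hg : HasDerivAt (fun r : ℝ => (ρbar - r) ^ s) (s * (ρbar - ϱ) ^ (s - 1) * (-1)) ϱ := by
    have h1 : HasDerivAt (fun r : ℝ => ρbar - r) (-1) ϱ := by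
      simpa using (hasDerivAt_id' ϱ).const_sub ρbar
    exact (Real.hasDerivAt_rpow_const (p := s) (Or.inl ht.ne')).comp ϱ h1
  have hf : HasDerivAt (fun r : ℝ => b * r) b ϱ := by
    simpa using (hasDerivAt_id ϱ).const_mul b
  have hdiv := hf.div hg (by positivity : (ρbar - ϱ) ^ s ≠ 0)
  have := hdiv.rpow_const (p := ν) (Or.inl hp)
  simp only [Pi.div_apply] at this
  unfold pHS
  convert this using 1
  ring

lemma eq1 (b s ν ϱ t : ℝ) (hb : 0 < b) (hϱ : 0 < ϱ) (ht : 0 < t) :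
    ϱ * (ν * (b * ϱ / t ^ s) ^ (ν - 1) *
        ((b * t ^ s - b * ϱ * (s * t ^ (s - 1) * (-1))) / (t ^ s) ^ 2))
      = ν * (b * ϱ) ^ ν * t ^ (-(s * ν) - 1) * (t + s * ϱ) := by
  have hP : (0:ℝ) < b * ϱ := by positivity
  have hts : (0:ℝ) < t ^ s := Real.rpow_pos_of_pos ht s
  have e1 : (b * ϱ / t ^ s) ^ (ν - 1) = (b * ϱ) ^ (ν - 1) / t ^ (s * (ν - 1)) := by
    rw [Real.div_rpow hP.le hts.le, ← Real.rpow_mul ht.le]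
  have e2 : (b * ϱ) ^ ν = (b * ϱ) ^ (ν - 1) * (b * ϱ) := by
    nth_rewrite 1 [show ν = (ν - 1) + 1 by ring]
    rw [Real.rpow_add hP, Real.rpow_one]
  have e3 : t ^ s = t ^ (s - 1) * t := by
    nth_rewrite 1 [show s = (s - 1) + 1 by ring]
    rw [Real.rpow_add ht, Real.rpow_one]
  have e4 : t ^ (-(s * ν) - 1) * t ^ (s * (ν - 1)) * (t ^ s * t ^ s)
      = t ^ (s - 1) := by
    rw [← Real.rpow_add ht, ← Real.rpow_add ht, ← Real.rpow_add ht]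
    ring_nf
  rw [e1, e2]
  have hd1 : t ^ (s * (ν - 1)) ≠ 0 := (Real.rpow_pos_of_pos ht _).ne'
  field_simp
  nth_rewrite 1 [e3]
  rw [← e4]
  ring

/- STATEMENT 12: If s > 3 then there exist ν ∈ (0, 1) and q > 2 with
s ≥ q·ν·s + q + 1; moreover, for any such ν and q there is C > 0 such that for
every ϱ ∈ [ρ̄/2, ρ̄) one has (ϱ·d/dϱ[(p_HS(ϱ))^ν])^q ≤ C·(ρ̄ − ϱ)^{1−s}
(the comparison underlying estimate (e33)). -/
theorem hard_sphere_pressure_power_e33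
    (b ρbar s : ℝ) (hb : 0 < b) (hρbar : 0 < ρbar) (hs : 3 < s) :
    (∃ ν q : ℝ, 0 < ν ∧ ν < 1 ∧ 2 < q ∧ q * ν * s + q + 1 ≤ s) ∧
    ∀ ν q : ℝ, 0 < ν → ν < 1 → 2 < q → q * ν * s + q + 1 ≤ s →
      ∃ C : ℝ, 0 < C ∧ ∀ ϱ : ℝ, ρbar / 2 ≤ ϱ → ϱ < ρbar →
        (ϱ * deriv (fun r : ℝ => pHS b ρbar s r ^ ν) ϱ) ^ q ≤
          C * (ρbar - ϱ) ^ (1 - s) := by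
  have hs0 : 0 < s := by linarith
  constructor
  · refine ⟨(s - 3) / ((s + 1) * s), (s + 1) / 2, ?_, ?_, ?_, ?_⟩
    · exact div_pos (by linarith) (by positivity)
    · rw [div_lt_one (by positivity)]
      nlinarith
    · linarith
    · have : (s + 1) / 2 * ((s - 3) / ((s + 1) * s)) * s + (s + 1) / 2 + 1 = s := by
        field_simp
        ring
      linarith [this.le]
  · intro ν q hν hν1 hq hle
    set K : ℝ := ν * (b * ρbar) ^ ν * ((1 + s) * ρbar) with hK
    have hKpos : 0 < K := by positivity
    set a : ℝ := (-(s * ν) - 1) * q - (1 - s) with ha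
    have ha0 : 0 ≤ a := by nlinarith
    refine ⟨K ^ q * (ρbar / 2) ^ a, by positivity, ?_⟩
    intro ϱ hϱ1 hϱ2
    have hϱ0 : 0 < ϱ := by linarith
    have ht : 0 < ρbar - ϱ := by linarith
    have hthalf : ρbar - ϱ ≤ ρbar / 2 := by linarith
    have hp : pHS b ρbar s ϱ ≠ 0 := by
      unfold pHS
      positivity
    have hD := (pHS_hasDerivAt b ρbar s ν ϱ hϱ0 hϱ2 hp).deriv
    rw [hD]
    rw [eq1 b s ν ϱ (ρbar - ϱ) hb hϱ0 ht]
    set t := ρbar - ϱ with htdef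
    -- step 1: the expression is ≤ K * t ^ (-(s*ν)-1)
    have hE0 : 0 < ν * (b * ϱ) ^ ν * t ^ (-(s * ν) - 1) * (t + s * ϱ) := by
      positivity
    have htp : 0 < t ^ (-(s * ν) - 1) := Real.rpow_pos_of_pos ht _
    have hstep1 : ν * (b * ϱ) ^ ν * t ^ (-(s * ν) - 1) * (t + s * ϱ)
        ≤ K * t ^ (-(s * ν) - 1) := by
      have h1 : (b * ϱ) ^ ν ≤ (b * ρbar) ^ ν :=
        Real.rpow_le_rpow (by positivity) (by nlinarith) hν.le
      have h2 : t + s * ϱ ≤ (1 + s) * ρbar := by nlinarith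
      have h3 : ν * (b * ϱ) ^ ν * t ^ (-(s * ν) - 1) * (t + s * ϱ)
          ≤ ν * (b * ρbar) ^ ν * t ^ (-(s * ν) - 1) * ((1 + s) * ρbar) := by
        have hb1 : 0 ≤ ν * (b * ϱ) ^ ν * t ^ (-(s * ν) - 1) := by positivity
        have hb2 : ν * (b * ϱ) ^ ν * t ^ (-(s * ν) - 1)
            ≤ ν * (b * ρbar) ^ ν * t ^ (-(s * ν) - 1) := by
          have := mul_le_mul_of_nonneg_left h1 hν.le
          exact mul_le_mul_of_nonneg_right this htp.le
        exact mul_le_mul hb2 h2 (by positivity) (by positivity)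
      calc ν * (b * ϱ) ^ ν * t ^ (-(s * ν) - 1) * (t + s * ϱ)
          ≤ ν * (b * ρbar) ^ ν * t ^ (-(s * ν) - 1) * ((1 + s) * ρbar) := h3
        _ = K * t ^ (-(s * ν) - 1) := by rw [hK]; ring
    -- step 2: raise to power q
    have hq0 : 0 ≤ q := by linarith
    have hstep2 : (ν * (b * ϱ) ^ ν * t ^ (-(s * ν) - 1) * (t + s * ϱ)) ^ q
        ≤ (K * t ^ (-(s * ν) - 1)) ^ q :=
      Real.rpow_le_rpow hE0.le hstep1 hq0
    have hsplit : (K * t ^ (-(s * ν) - 1)) ^ q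
        = K ^ q * t ^ ((-(s * ν) - 1) * q) := by
      rw [Real.mul_rpow hKpos.le htp.le, ← Real.rpow_mul ht.le]
    have hexp : t ^ ((-(s * ν) - 1) * q) = t ^ a * t ^ (1 - s) := by
      rw [← Real.rpow_add ht, ha]
      ring_nf
    have hta : t ^ a ≤ (ρbar / 2) ^ a := Real.rpow_le_rpow ht.le hthalf ha0
    calc (ν * (b * ϱ) ^ ν * t ^ (-(s * ν) - 1) * (t + s * ϱ)) ^ q
        ≤ (K * t ^ (-(s * ν) - 1)) ^ q := hstep2
      _ = K ^ q * (t ^ a * t ^ (1 - s)) := by rw [hsplit, hexp]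
      _ ≤ K ^ q * ((ρbar / 2) ^ a * t ^ (1 - s)) := by
          have := mul_le_mul_of_nonneg_right hta (Real.rpow_pos_of_pos ht (1 - s)).le
          exact mul_le_mul_of_nonneg_left this (Real.rpow_pos_of_pos hKpos q).le
      _ = K ^ q * (ρbar / 2) ^ a * t ^ (1 - s) := by ring
end

section
/- There exists a constant C > 0 (one may take C = P(1)) such that for all ϱ > 0 and ϑ > 0 the monatomic pressure p_m(ϱ,ϑ) = ϑ^{5/2}·P(ϱ·ϑ^{−3/2}) satisfies 0 < p_m(ϱ,ϑ) ≤ C·(ϑ^{5/2} + ϱ^{5/3}). -/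
/- STATEMENT 17: There exists C > 0 (one may take C = P(1)) such that for all
ϱ > 0 and ϑ > 0 the monatomic pressure p_m(ϱ,ϑ) = ϑ^{5/2}·P(ϱ·ϑ^{−3/2}) satisfies
0 < p_m(ϱ,ϑ) ≤ C·(ϑ^{5/2} + ϱ^{5/3}). -/
theorem monatomic_pressure_bound
    (P P' : ℝ → ℝ) (c : ℝ)
    (hderiv : ∀ Z : ℝ, 0 ≤ Z → HasDerivAt P (P' Z) Z)
    (hP'cont : ContinuousOn P' (Set.Ici 0))
    (hP0 : P 0 = 0)
    (hP'pos : ∀ Z : ℝ, 0 ≤ Z → 0 < P' Z)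
    (hc : 0 < c)
    (hm4 : ∀ Z : ℝ, 0 < Z →
      0 < ((5/3) * P Z - P' Z * Z) / Z ∧ ((5/3) * P Z - P' Z * Z) / Z ≤ c) :
    ∃ C : ℝ, 0 < C ∧ C = P 1 ∧ ∀ ϱ ϑ : ℝ, 0 < ϱ → 0 < ϑ →
      0 < ϑ ^ ((5:ℝ)/2) * P (ϱ * ϑ ^ (-(3:ℝ)/2)) ∧
      ϑ ^ ((5:ℝ)/2) * P (ϱ * ϑ ^ (-(3:ℝ)/2)) ≤
        C * (ϑ ^ ((5:ℝ)/2) + ϱ ^ ((5:ℝ)/3)) := by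
  -- P is continuous on [0,∞)
  have hPcont : ContinuousOn P (Set.Ici 0) := fun x hx =>
    ((hderiv x hx).continuousAt).continuousWithinAt
  -- P strictly monotone on [0,∞)
  have hmono : StrictMonoOn P (Set.Ici 0) := by
    apply strictMonoOn_of_deriv_pos (convex_Ici 0) hPcont
    intro x hx
    rw [interior_Ici] at hx
    rw [(hderiv x (le_of_lt hx)).deriv]
    exact hP'pos x (le_of_lt hx)
  have hPpos : ∀ Z : ℝ, 0 < Z → 0 < P Z := by
    intro Z hZ
    have := hmono (Set.self_mem_Ici) (Set.mem_Ici.mpr hZ.le) hZ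
    rwa [hP0] at this
  have hP1 : 0 < P 1 := hPpos 1 one_pos
  -- f Z = P Z * Z^(-5/3) is antitone on [1,∞)
  set f : ℝ → ℝ := fun Z => P Z * Z ^ (-(5:ℝ)/3) with hf
  have hfderiv : ∀ Z : ℝ, 0 < Z →
      HasDerivAt f (P' Z * Z ^ (-(5:ℝ)/3) + P Z * ((-(5:ℝ)/3) * Z ^ ((-(5:ℝ)/3) - 1))) Z := by
    intro Z hZ
    exact (hderiv Z hZ.le).mul (Real.hasDerivAt_rpow_const (Or.inl hZ.ne'))
  have hfanti : AntitoneOn f (Set.Ici 1) := by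
    apply antitoneOn_of_deriv_nonpos (convex_Ici 1)
    · intro x hx
      exact ((hfderiv x (lt_of_lt_of_le one_pos hx)).continuousAt).continuousWithinAt
    · intro x hx
      rw [interior_Ici] at hx
      exact ((hfderiv x (lt_trans one_pos hx)).differentiableAt).differentiableWithinAt
    · intro x hx
      rw [interior_Ici] at hx
      have hx0 : (0:ℝ) < x := lt_trans one_pos hx
      rw [(hfderiv x hx0).deriv]
      have h4 := (hm4 x hx0).1
      have hnum : 0 < (5/3) * P x - P' x * x := by
        have := (div_pos_iff.mp h4)
        rcases this with ⟨h, _⟩ | ⟨_, h⟩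
        · exact h
        · linarith
      have hrw : P' x * x ^ (-(5:ℝ)/3) + P x * ((-(5:ℝ)/3) * x ^ ((-(5:ℝ)/3) - 1))
          = (P' x * x - (5/3) * P x) * x ^ ((-(5:ℝ)/3) - 1) := by
        have hx1 : x ^ (-(5:ℝ)/3) = x * x ^ ((-(5:ℝ)/3) - 1) := by
          rw [← Real.rpow_one_add' hx0.le (by norm_num)]
          ring_nf
        rw [hx1]; ring
      rw [hrw]
      apply mul_nonpos_of_nonpos_of_nonneg
      · linarith
      · exact (Real.rpow_pos_of_pos hx0 _).le
  have hbound : ∀ Z : ℝ, 1 ≤ Z → P Z ≤ P 1 * Z ^ ((5:ℝ)/3) := by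
    intro Z hZ
    have hZ0 : (0:ℝ) < Z := lt_of_lt_of_le one_pos hZ
    have := hfanti (Set.self_mem_Ici) (Set.mem_Ici.mpr hZ) hZ
    simp only [hf, Real.one_rpow, mul_one] at this
    have h2 : P Z * Z ^ (-(5:ℝ)/3) * Z ^ ((5:ℝ)/3) ≤ P 1 * Z ^ ((5:ℝ)/3) :=
      mul_le_mul_of_nonneg_right this (Real.rpow_pos_of_pos hZ0 _).le
    rwa [mul_assoc, ← Real.rpow_add hZ0, (by norm_num : -(5:ℝ)/3 + 5/3 = 0),
      Real.rpow_zero, mul_one] at h2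
  refine ⟨P 1, hP1, rfl, ?_⟩
  intro ϱ ϑ hϱ hϑ
  set Z := ϱ * ϑ ^ (-(3:ℝ)/2) with hZdef
  have hZ0 : 0 < Z := mul_pos hϱ (Real.rpow_pos_of_pos hϑ _)
  have hϑ52 : 0 < ϑ ^ ((5:ℝ)/2) := Real.rpow_pos_of_pos hϑ _
  constructor
  · exact mul_pos hϑ52 (hPpos Z hZ0)
  · rcases le_total Z 1 with hle | hge
    · -- P Z ≤ P 1
      have hPZ : P Z ≤ P 1 := by
        rcases eq_or_lt_of_le hle with h | h
        · rw [h]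
        · exact (hmono (Set.mem_Ici.mpr hZ0.le) (Set.mem_Ici.mpr zero_le_one) h).le
      have h1 : ϑ ^ ((5:ℝ)/2) * P Z ≤ ϑ ^ ((5:ℝ)/2) * P 1 :=
        mul_le_mul_of_nonneg_left hPZ hϑ52.le
      have h2 : 0 ≤ ϱ ^ ((5:ℝ)/3) := (Real.rpow_pos_of_pos hϱ _).le
      nlinarith [hP1]
    · have hPZ : P Z ≤ P 1 * Z ^ ((5:ℝ)/3) := hbound Z hge
      have hkey : ϑ ^ ((5:ℝ)/2) * Z ^ ((5:ℝ)/3) = ϱ ^ ((5:ℝ)/3) := by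
        rw [hZdef, Real.mul_rpow hϱ.le (Real.rpow_pos_of_pos hϑ _).le,
          ← Real.rpow_mul hϑ.le]
        rw [show ((-(3:ℝ)/2) * (5/3)) = -((5:ℝ)/2) by norm_num]
        rw [← mul_assoc, mul_comm (ϑ ^ ((5:ℝ)/2)) (ϱ ^ ((5:ℝ)/3)), mul_assoc,
          ← Real.rpow_add hϑ]
        norm_num
      have h1 : ϑ ^ ((5:ℝ)/2) * P Z ≤ ϑ ^ ((5:ℝ)/2) * (P 1 * Z ^ ((5:ℝ)/3)) :=
        mul_le_mul_of_nonneg_left hPZ hϑ52.le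
      have h2 : ϑ ^ ((5:ℝ)/2) * (P 1 * Z ^ ((5:ℝ)/3)) = P 1 * ϱ ^ ((5:ℝ)/3) := by
        rw [← hkey]; ring
      rw [h2] at h1
      nlinarith [hϑ52, hP1]
end
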